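/- Let A be a locally noetherian Grothendieck category in which every nonzero object has an associated point. Then the assignments C ↦ Supp(C) := ⋃_{M ∈ C} Supp(M) and S ↦ Supp⁻¹(S) := {M ∈ A_fg : Supp(M) ⊆ S} are mutually inverse bijections between the Serre subcategories of A_fg and the specialization closed subsets of 𝔖pec(A); concretely: (i) for every Serre subcategory C of A_fg, Supp(C) is specialization closed and Supp⁻¹(Supp(C)) = C, and (ii) for every specialization closed subset S of 𝔖pec(A), Supp⁻¹(S) is a Serre subcategory of A_fg and Supp(Supp⁻¹(S)) = S. -/

import Mathlib

/-!
Common set-up: Rosenberg's spectrum of an abelian category.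

For objects `X Y` of an abelian category `C`, `X ≺ Y` means that `X` is a subquotient of a
finite direct sum of copies of `Y`; `X ≈ Y` means `X ≺ Y ≺ X`.  A nonzero object `P` is
*spectral* if it is `≈`-equivalent to each of its nonzero subobjects, and the spectrum
`𝔖pec(C)` is the collection of `≈`-equivalence classes `⟨P⟩` of spectral objects.
`Supp(M) = {⟨P⟩ : P ≺ M}` and `Ass(M) = {⟨P⟩ : some spectral object of class ⟨P⟩ embeds in M}`.
-/

open CategoryTheory CategoryTheory.Limits

attribute [local instance] CategoryTheory.Abelian.hasFiniteBiproducts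
attribute [local instance] CategoryTheory.Limits.hasBinaryBiproducts_of_finite_biproducts

universe v u

namespace RosenbergSpec

variable (C : Type u) [Category.{v} C] [Abelian C]

/-- `X ≺ Y` : `X` is a subquotient of a finite direct sum of copies of `Y`. -/
def Prec (X Y : C) : Prop :=
  ∃ n : ℕ, 0 < n ∧ ∃ (S : C) (ι : S ⟶ ⨁ (fun _ : Fin n => Y)) (π : S ⟶ X),
    Mono ι ∧ Epi π

/-- `X ≈ Y` : mutual subquotient equivalence. -/
def PrecEquiv (X Y : C) : Prop := Prec C X Y ∧ Prec C Y X

/-- A nonzero object is spectral if it is `≈`-equivalent to each of its nonzero subobjects. -/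
def IsSpectral (P : C) : Prop :=
  ¬ IsZero P ∧ ∀ (Q : C) (f : Q ⟶ P), Mono f → ¬ IsZero Q → PrecEquiv C Q P

/-- The type of spectral objects of `C`. -/
def SpectralObj := {P : C // IsSpectral C P}

/-- The spectrum `𝔖pec(C)` : equivalence classes `⟨P⟩` of spectral objects. -/
def SpecPoint := Quot (fun P Q : SpectralObj C => PrecEquiv C P.1 Q.1)

/-- The point `⟨P⟩` of the spectrum attached to a spectral object `P`. -/
def pt (P : SpectralObj C) : SpecPoint C := Quot.mk _ P

/-- `Supp(M) = {⟨P⟩ : P spectral, P ≺ M}`. -/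
def supp (M : C) : Set (SpecPoint C) :=
  {x | ∃ P : SpectralObj C, pt C P = x ∧ Prec C P.1 M}

/-- `Ass(M) = {⟨P⟩ : some spectral object of class ⟨P⟩ is a subobject of M}`. -/
def ass (M : C) : Set (SpecPoint C) :=
  {x | ∃ P : SpectralObj C, pt C P = x ∧ ∃ f : P.1 ⟶ M, Mono f}

/-- A subset of the spectrum is specialization closed if together with any point `⟨P⟩`
it contains all of `Supp(P)`. -/
def SpecializationClosed (S : Set (SpecPoint C)) : Prop :=
  ∀ P : SpectralObj C, pt C P ∈ S → supp C P.1 ⊆ S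

/-- Every nonzero object of `C` has an associated point. -/
def HasAssociatedPoints : Prop :=
  ∀ M : C, ¬ IsZero M → (ass C M).Nonempty

/-- A Grothendieck category is locally noetherian if it admits a small generating family
of noetherian objects. -/
def LocallyNoetherian : Prop :=
  ∃ (ι : Type v) (G : ι → C), ObjectProperty.IsSeparating (Set.range G) ∧ ∀ i, IsNoetherianObject (G i)

/-- `0 ⟶ X ⟶ M ⟶ Y ⟶ 0` is a short exact sequence. -/
def IsShortExact {X M Y : C} (f : X ⟶ M) (g : M ⟶ Y) : Prop :=
  ∃ w : f ≫ g = 0, (ShortComplex.mk f g w).ShortExact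

/-- `f : N ⟶ M` exhibits `N` as an essential subobject of `M`. -/
def IsEssential {N M : C} (f : N ⟶ M) : Prop :=
  Mono f ∧ ∀ (K : C) (g : K ⟶ M), Mono g → ¬ IsZero K → ¬ IsZero (pullback f g)

/-- `i : P ⟶ E` exhibits `E` as an injective hull of `P`. -/
def IsInjectiveHull {P E : C} (i : P ⟶ E) : Prop :=
  Injective E ∧ IsEssential C i

/-- A torsion pair `(T, F)` on an abelian category: both classes are replete, all maps from
`T` to `F` vanish, and every object is an extension of an object of `F` by an object of `T`. -/
structure IsTorsionPair (T F : Set C) : Prop where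
  repleteT : ∀ X Y : C, X ∈ T → Nonempty (X ≅ Y) → Y ∈ T
  repleteF : ∀ X Y : C, X ∈ F → Nonempty (X ≅ Y) → Y ∈ F
  hom_zero : ∀ X ∈ T, ∀ Y ∈ F, ∀ f : X ⟶ Y, f = 0
  exists_ses : ∀ M : C, ∃ (X Y : C) (f : X ⟶ M) (g : M ⟶ Y),
    IsShortExact C f g ∧ X ∈ T ∧ Y ∈ F

end RosenbergSpec

namespace RosenbergSpec

variable (C : Type u) [Category.{v} C] [Abelian C]

/-- `Supp(𝒞) = ⋃_{M ∈ 𝒞} Supp(M)`. -/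
def suppSet (𝒞 : Set C) : Set (SpecPoint C) := ⋃ M ∈ 𝒞, supp C M

/-- `Supp⁻¹(S) = {M ∈ A_fg : Supp(M) ⊆ S}`. -/
def suppInv (S : Set (SpecPoint C)) : Set C :=
  {M : C | IsNoetherianObject M ∧ supp C M ⊆ S}

/-- A Serre subcategory of `A_fg` : a full replete subcategory of the finitely generated
(= noetherian) objects containing `0`, closed under subobjects, quotients and extensions. -/
structure IsSerreFG (𝒞 : Set C) : Prop where
  fg : ∀ X ∈ 𝒞, IsNoetherianObject X
  replete : ∀ X Y : C, X ∈ 𝒞 → Nonempty (X ≅ Y) → Y ∈ 𝒞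
  zero_mem : ∀ Z : C, IsZero Z → Z ∈ 𝒞
  subobject_mem : ∀ (X Y : C) (f : X ⟶ Y), Mono f → Y ∈ 𝒞 → X ∈ 𝒞
  quotient_mem : ∀ (X Y : C) (f : X ⟶ Y), Epi f → X ∈ 𝒞 → Y ∈ 𝒞
  extension_mem : ∀ (X M Y : C) (f : X ⟶ M) (g : M ⟶ Y),
    IsShortExact C f g → X ∈ 𝒞 → Y ∈ 𝒞 → M ∈ 𝒞

end RosenbergSpec

/-!
A spectral object `P` is `≈` to each of its nonzero subobjects, so if `P ≺ M` for an extension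
`0 → X → M → Y → 0`, then either `P` is a quotient of a subobject of `Yⁿ`, or some nonzero
subobject of `P`, hence `P` itself, is `≺ X`. Thus `Supp` is subadditive on extensions, and as
noetherian objects form a Serre class, `Supp⁻¹(S)` is a Serre subcategory of `A_fg`.

Conversely, let `M` be noetherian with `Supp(M) ⊆ Supp(𝒞)` and let `T` be a maximal subobject of
`M` lying in `𝒞`. If `T ≠ M`, an associated point of `M/T` is a nonzero spectral subobject
`Q ⊆ M/T` with `Q ≺ M`; its point lies in `Supp(𝒞)`, so `Q ≺ N` for some `N ∈ 𝒞` and `Q ∈ 𝒞`.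
The preimage of `Q` in `M` is then an extension of `Q` by `T` strictly larger than `T`,
a contradiction. Finally, local noetherianity provides every spectral `P` with a nonzero
noetherian subobject, which represents the same point, whence `Supp(Supp⁻¹(S)) = S` for `S`
specialization closed.
-/

namespace CategoryTheory

variable {C : Type u} [Category.{v} C]

def IsSubquotient (X Y : C) : Prop :=
  ∃ (S : C) (i : S ⟶ Y) (p : S ⟶ X), Mono i ∧ Epi p

lemma IsSubquotient.of_mono {X Y : C} (i : X ⟶ Y) [Mono i] : IsSubquotient X Y :=
  ⟨X, i, 𝟙 X, inferInstance, inferInstance⟩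

lemma IsSubquotient.of_epi {X Y : C} (p : Y ⟶ X) [Epi p] : IsSubquotient X Y :=
  ⟨Y, 𝟙 Y, p, inferInstance, inferInstance⟩

lemma ObjectProperty.prop_of_isSubquotient (P : ObjectProperty C) [P.IsClosedUnderSubobjects]
    [P.IsClosedUnderQuotients] {X Y : C} (h : IsSubquotient X Y) (hY : P Y) : P X := by
  obtain ⟨S, i, p, _, _⟩ := h
  exact P.prop_of_epi p (P.prop_of_mono i hY)

lemma isNoetherianObject_of_strictMono {Y : C} {β : Type*} [Preorder β] [WellFoundedGT β]
    (φ : Subobject Y → β) (hφ : StrictMono φ) : IsNoetherianObject Y :=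
  (isNoetherianObject.is_iff Y).2 hφ.wellFoundedGT

variable [Abelian C]

namespace IsSubquotient

lemma trans {X Y Z : C} (h₁ : IsSubquotient X Y) (h₂ : IsSubquotient Y Z) : IsSubquotient X Z := by
  obtain ⟨S, i, p, _, _⟩ := h₁
  obtain ⟨T, j, q, _, _⟩ := h₂
  exact ⟨pullback i q, pullback.snd i q ≫ j, pullback.fst i q ≫ p, inferInstance, inferInstance⟩

lemma biproduct_const {X Y : C} (h : IsSubquotient X Y) (J : Type) [Finite J] :
    IsSubquotient (⨁ fun _ : J => X) (⨁ fun _ : J => Y) := by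
  obtain ⟨S, i, p, _, _⟩ := h
  exact ⟨⨁ fun _ : J => S, biproduct.map fun _ => i, biproduct.map fun _ => p, inferInstance,
    inferInstance⟩

lemma isZero {X Y : C} (h : IsSubquotient X Y) (hY : IsZero Y) : IsZero X := by
  obtain ⟨S, i, p, _, _⟩ := h
  exact (hY.of_mono i).of_epi p

end IsSubquotient

namespace Subobject

lemma le_of_arrow_comp_cokernel_π {X : C} {A B : Subobject X}
    (h : A.arrow ≫ cokernel.π B.arrow = 0) : A ≤ B :=
  le_of_comm (Abelian.monoLift B.arrow A.arrow h) (Abelian.monoLift_comp _ _ _)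

lemma epi_pullbackπ {X Y : C} (p : X ⟶ Y) [Epi p] (A : Subobject Y) : Epi (pullbackπ p A) :=
  (MorphismProperty.epimorphisms C).of_isPullback (isPullback p A).flip (.infer_property p)

lemma pullback_obj_le_pullback_obj_iff {X Y : C} (p : X ⟶ Y) [Epi p] {A B : Subobject Y} :
    (pullback p).obj A ≤ (pullback p).obj B ↔ A ≤ B := by
  refine ⟨fun h => le_of_arrow_comp_cokernel_π ?_, fun h => (pullback p).monotone h⟩
  have := epi_pullbackπ p A
  rw [← cancel_epi (pullbackπ p A), comp_zero, ← Category.assoc, (isPullback p A).w,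
    ← ofLE_arrow h, Category.assoc, Category.assoc, ← (isPullback p B).w_assoc,
    cokernel.condition, comp_zero, comp_zero]

lemma monotone_imageSubobject_arrow_comp {X Y : C} (g : X ⟶ Y) :
    Monotone fun A : Subobject X => imageSubobject (A.arrow ≫ g) := fun A B h => by
  dsimp only
  rw [← ofLE_arrow h, Category.assoc]
  exact imageSubobject_comp_le _ _

lemma le_of_shortExact {S : ShortComplex C} (hS : S.ShortExact) {A B : Subobject S.X₂}
    (hAB : A ≤ B) (h₁ : (pullback S.f).obj B ≤ (pullback S.f).obj A)
    (h₃ : imageSubobject (B.arrow ≫ S.g) ≤ imageSubobject (A.arrow ≫ S.g)) : B ≤ A := by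
  have := hS.mono_f
  -- Up to refinement, `B.arrow = a₀ ≫ A.arrow + z` with `z ≫ S.g = 0`; then `z` lies in
  -- `B ∩ S.X₁ ≤ A`, so `B.arrow` factors through `A`.
  obtain ⟨T, π, _, a₀, ha₀⟩ := surjective_up_to_refinements_of_epi
    (factorThruImageSubobject (A.arrow ≫ S.g))
    (factorThruImageSubobject (B.arrow ≫ S.g) ≫ ofLE _ _ h₃)
  have hg : (π ≫ B.arrow - a₀ ≫ A.arrow) ≫ S.g = 0 := by
    have := ha₀ =≫ (imageSubobject (A.arrow ≫ S.g)).arrow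
    simp only [Category.assoc, ofLE_arrow, imageSubobject_arrow_comp] at this
    simp [this]
  obtain ⟨w, -, hw⟩ := (isPullback S.f B).exists_lift (π - a₀ ≫ ofLE A B hAB)
    (hS.exact.lift _ hg) (by simp)
  have ha₁ : (w ≫ ofLE _ _ h₁ ≫ pullbackπ S.f A) ≫ A.arrow = π ≫ B.arrow - a₀ ≫ A.arrow := by
    rw [Category.assoc, Category.assoc, (isPullback S.f A).w, ofLE_arrow_assoc, reassoc_of% hw]
    exact hS.exact.lift_f _ _
  apply le_of_arrow_comp_cokernel_π
  rw [← cancel_epi π, comp_zero, ← Category.assoc,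
    show π ≫ B.arrow = (a₀ + w ≫ ofLE _ _ h₁ ≫ pullbackπ S.f A) ≫ A.arrow by
      rw [Preadditive.add_comp, ha₁]; abel,
    Category.assoc, cokernel.condition, comp_zero]

end Subobject

lemma isNoetherianObject_of_epi {X Y : C} (p : X ⟶ Y) [Epi p] [IsNoetherianObject X] :
    IsNoetherianObject Y :=
  isNoetherianObject_of_strictMono _
    (OrderEmbedding.ofMapLEIff _ fun _ _ => Subobject.pullback_obj_le_pullback_obj_iff p).strictMono

lemma isNoetherianObject_of_shortExact {S : ShortComplex C} (hS : S.ShortExact)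
    [IsNoetherianObject S.X₁] [IsNoetherianObject S.X₃] : IsNoetherianObject S.X₂ := by
  let φ (A : Subobject S.X₂) := ((Subobject.pullback S.f).obj A, imageSubobject (A.arrow ≫ S.g))
  have hφ : Monotone φ := fun A B h =>
    ⟨(Subobject.pullback S.f).monotone h, Subobject.monotone_imageSubobject_arrow_comp S.g h⟩
  exact isNoetherianObject_of_strictMono φ fun A B hAB => (hφ hAB.le).lt_of_not_ge fun h =>
    hAB.not_ge (Subobject.le_of_shortExact hS hAB.le h.1 h.2)

lemma shortExact_biproduct_ι {J : Type} [Finite J] (f : J → C) (i : J) :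
    (ShortComplex.mk (biproduct.ι f i) (biproduct.toSubtype f (· ≠ i))
      (by classical simp [biproduct.ι_toSubtype])).ShortExact :=
  .mk' (ShortComplex.exact_of_g_is_cokernel _ (biproduct.isColimitToSubtype f i)) inferInstance
    (epi_of_epi_fac (biproduct.fromSubtype_toSubtype _ _))

lemma ShortComplex.ShortExact.exists_lift_biproduct_map {S : ShortComplex C} (hS : S.ShortExact)
    {J : Type} [Finite J] {W : C} (x : W ⟶ ⨁ fun _ : J => S.X₂)
    (hx : x ≫ biproduct.map (fun _ => S.g) = 0) :
    ∃ l : W ⟶ ⨁ fun _ : J => S.X₁, l ≫ biproduct.map (fun _ => S.f) = x := by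
  have := hS.mono_f
  have hxj (j : J) : (x ≫ biproduct.π _ j) ≫ S.g = 0 := by
    simpa using hx =≫ biproduct.π _ j
  exact ⟨biproduct.lift fun j => hS.exact.lift _ (hxj j), by ext; simp⟩

lemma shortExact_pullback_cokernel_π {T M Q : C} (t : T ⟶ M) [Mono t] (u : Q ⟶ cokernel t)
    [Mono u] :
    (ShortComplex.mk (pullback.lift 0 t (by simp) : T ⟶ pullback u (cokernel.π t))
      (pullback.fst u (cokernel.π t)) (pullback.lift_fst _ _ _)).ShortExact := by
  have : Mono (pullback.lift 0 t (by simp) : T ⟶ pullback u (cokernel.π t)) :=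
    mono_of_mono_fac (pullback.lift_snd _ _ _)
  refine .mk' (ShortComplex.exact_of_f_is_kernel _ (KernelFork.IsLimit.ofι' _ _ fun x hx => ?_))
    this inferInstance
  refine ⟨Abelian.monoLift t (x ≫ pullback.snd _ _) ?_, pullback.hom_ext ?_ ?_⟩ <;>
    dsimp at hx ⊢
  · simp [← pullback.condition, reassoc_of% hx]
  · rw [Category.assoc, pullback.lift_fst, comp_zero, hx]
  · rw [Category.assoc, pullback.lift_snd, Abelian.monoLift_comp]

namespace ObjectProperty

variable (P : ObjectProperty C)

lemma prop_biproduct_const [P.ContainsZero] [P.IsClosedUnderIsomorphisms]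
    [P.IsClosedUnderExtensions] {Y : C} (hY : P Y) (n : ℕ) : P (⨁ fun _ : Fin n => Y) := by
  induction n with
  | zero =>
    exact P.prop_of_isZero ((IsZero.iff_id_eq_zero _).2 (biproduct.hom_ext _ _ fun j => j.elim0))
  | succ n ih =>
    exact P.prop_X₂_of_shortExact (shortExact_biproduct_ι _ 0) hY
      (P.prop_of_iso (biproduct.whiskerEquiv (finSuccAboveEquiv 0) fun _ => Iso.refl Y) ih)

lemma prop_of_forall_quotient_exists_subobject [P.IsSerreClass] (M : C) [IsNoetherianObject M]
    (h : ∀ (N : C) (p : M ⟶ N), Epi p → ¬ IsZero N →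
      ∃ (Q : C) (u : Q ⟶ N), Mono u ∧ ¬ IsZero Q ∧ P Q) :
    P M := by
  obtain ⟨T, hT, hmax⟩ := wellFounded_gt.has_min {T : Subobject M | P (T : C)}
    ⟨⊥, P.prop_of_isZero (IsZero.of_iso (isZero_zero C) Subobject.botCoeIsoZero)⟩
  by_contra hM
  have hcoker : ¬ IsZero (cokernel T.arrow) := fun hz =>
    have := Preadditive.epi_of_isZero_cokernel _ hz
    have := isIso_of_mono_of_epi T.arrow
    hM (P.prop_of_iso (asIso T.arrow) hT)
  obtain ⟨Q, u, _, hQ, hPQ⟩ := h _ (cokernel.π T.arrow) inferInstance hcoker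
  have hPT' : P (Subobject.mk (pullback.snd u (cokernel.π T.arrow)) : C) :=
    P.prop_of_iso (Subobject.underlyingIso _).symm
      (P.prop_X₂_of_shortExact (shortExact_pullback_cokernel_π T.arrow u) hT hPQ)
  refine hmax _ hPT' (lt_of_le_of_ne
    (Subobject.le_mk_of_comm (pullback.lift 0 T.arrow (by simp)) (pullback.lift_snd _ _ _))
    fun heq => hQ ?_)
  have hu0 : pullback.fst u (cokernel.π T.arrow) ≫ u = 0 := by
    rw [pullback.condition, ← Subobject.ofMkLE_arrow heq.ge, Category.assoc, cokernel.condition,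
      comp_zero]
  exact IsZero.of_mono_eq_zero u (zero_of_epi_comp _ hu0)

end ObjectProperty

end CategoryTheory

namespace RosenbergSpec

section

variable {C : Type u} [Category.{v} C] [Abelian C]

lemma prec_iff {X Y : C} :
    Prec C X Y ↔ ∃ n, 0 < n ∧ IsSubquotient X (⨁ fun _ : Fin n => Y) := Iff.rfl

lemma Prec.of_isSubquotient {X Y : C} (h : IsSubquotient X Y) : Prec C X Y :=
  ⟨1, one_pos, h.trans (.of_mono (biproduct.ι (fun _ : Fin 1 => Y) 0))⟩

lemma Prec.refl (X : C) : Prec C X X := .of_isSubquotient (.of_mono (𝟙 X))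

lemma Prec.of_mono {X Y : C} (i : X ⟶ Y) [Mono i] : Prec C X Y := .of_isSubquotient (.of_mono i)

lemma Prec.of_epi {X Y : C} (p : Y ⟶ X) [Epi p] : Prec C X Y := .of_isSubquotient (.of_epi p)

lemma Prec.trans {X Y Z : C} (h₁ : Prec C X Y) (h₂ : Prec C Y Z) : Prec C X Z := by
  obtain ⟨n, hn, h₁⟩ := prec_iff.1 h₁
  obtain ⟨m, hm, h₂⟩ := prec_iff.1 h₂
  let e : (⨁ fun _ : Fin n => ⨁ fun _ : Fin m => Z) ≅ ⨁ fun _ : Fin (n * m) => Z :=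
    biproductBiproductIso _ _ ≪≫ biproduct.whiskerEquiv
      ((Equiv.sigmaEquivProd _ _).trans finProdFinEquiv) fun _ => Iso.refl Z
  exact ⟨n * m, Nat.mul_pos hn hm, h₁.trans ((h₂.biproduct_const _).trans (.of_mono e.hom))⟩

lemma Prec.isZero {X Y : C} (h : Prec C X Y) (hY : IsZero Y) : IsZero X := by
  obtain ⟨n, -, h⟩ := prec_iff.1 h
  exact h.isZero ((IsZero.iff_id_eq_zero _).2 (biproduct.hom_ext _ _ fun _ => hY.eq_of_tgt _ _))

lemma prop_of_prec (P : ObjectProperty C) [P.IsSerreClass] {X Y : C} (h : Prec C X Y)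
    (hY : P Y) : P X := by
  obtain ⟨n, -, h⟩ := prec_iff.1 h
  exact P.prop_of_isSubquotient h (P.prop_biproduct_const hY n)

lemma pt_eq_pt_iff {P Q : SpectralObj C} : pt C P = pt C Q ↔ PrecEquiv C P.1 Q.1 := by
  have : Equivalence fun P Q : SpectralObj C => PrecEquiv C P.1 Q.1 :=
    ⟨fun P => ⟨.refl _, .refl _⟩, fun h => ⟨h.2, h.1⟩,
      fun h₁ h₂ => ⟨h₁.1.trans h₂.1, h₂.2.trans h₁.2⟩⟩
  exact ⟨fun h => this.eqvGen_iff.1 (Quot.eqvGen_exact h), fun h => Quot.sound h⟩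

lemma pt_mem_supp_iff {P : SpectralObj C} {M : C} : pt C P ∈ supp C M ↔ Prec C P.1 M :=
  ⟨fun ⟨_, hQ, h⟩ => (pt_eq_pt_iff.1 hQ).2.trans h, fun h => ⟨P, rfl, h⟩⟩

lemma supp_mono {M N : C} (h : Prec C M N) : supp C M ⊆ supp C N :=
  fun _ ⟨P, hP, hPM⟩ => ⟨P, hP, hPM.trans h⟩

lemma supp_eq_empty_of_isZero {M : C} (hM : IsZero M) : supp C M = ∅ :=
  Set.eq_empty_iff_forall_notMem.2 fun _ ⟨P, _, h⟩ => P.2.1 (h.isZero hM)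

lemma IsSpectral.prec_or_prec_of_shortExact {S : ShortComplex C} (hS : S.ShortExact) {P : C}
    (hP : IsSpectral C P) (h : Prec C P S.X₂) : Prec C P S.X₁ ∨ Prec C P S.X₃ := by
  obtain ⟨n, hn, T, ι, π, _, _⟩ := h
  let g := ι ≫ biproduct.map fun _ => S.g
  -- `kernel g` is the part of `T` lying over `S.X₁ⁿ`.
  by_cases hk : kernel.ι g ≫ π = 0
  · exact .inr ⟨n, hn, Abelian.coimage g, Abelian.factorThruCoimage g, cokernel.desc _ π hk,
      inferInstance, epi_of_epi_fac (cokernel.π_desc _ _ _)⟩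
  · obtain ⟨l, hl⟩ := hS.exists_lift_biproduct_map (kernel.ι g ≫ ι) (by simp [g])
    have : Mono l := mono_of_mono_fac hl
    have hI : ¬ IsZero (image (kernel.ι g ≫ π)) := fun hI =>
      hk (by rw [← image.fac (kernel.ι g ≫ π), hI.eq_of_tgt (factorThruImage _) 0, zero_comp])
    exact .inl ((hP.2 _ (image.ι _) inferInstance hI).2.trans
      ⟨n, hn, kernel g, l, factorThruImage _, inferInstance, inferInstance⟩)

lemma supp_subset_union_of_shortExact {S : ShortComplex C} (hS : S.ShortExact) :
    supp C S.X₂ ⊆ supp C S.X₁ ∪ supp C S.X₃ := by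
  rintro _ ⟨P, rfl, h⟩
  exact (P.2.prec_or_prec_of_shortExact hS h).imp pt_mem_supp_iff.2 pt_mem_supp_iff.2

lemma IsSpectral.of_mono {P Q : C} (hP : IsSpectral C P) (i : Q ⟶ P) [Mono i] (hQ : ¬ IsZero Q) :
    IsSpectral C Q := by
  refine ⟨hQ, fun R j _ hR => ?_⟩
  have hQP := hP.2 Q i inferInstance hQ
  have hRP := hP.2 R (j ≫ i) inferInstance hR
  exact ⟨hRP.1.trans hQP.2, hQP.1.trans hRP.2⟩

lemma exists_mono_isNoetherianObject (hln : LocallyNoetherian C) {M : C} (hM : ¬ IsZero M) :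
    ∃ (N : C) (i : N ⟶ M), Mono i ∧ ¬ IsZero N ∧ IsNoetherianObject N := by
  obtain ⟨_, G, hG, hnoeth⟩ := hln
  obtain ⟨_, ⟨k, rfl⟩, f, hf⟩ : ∃ X ∈ Set.range G, ∃ f : X ⟶ M, f ≠ 0 := by
    by_contra! h
    exact hM ((IsZero.iff_id_eq_zero M).2 (hG _ _ fun X hX f => by simp [h X hX f]))
  have := hnoeth k
  refine ⟨image f, image.ι f, inferInstance, fun hI => hf ?_,
    isNoetherianObject_of_epi (factorThruImage f)⟩
  rw [← image.fac f, hI.eq_of_tgt (factorThruImage f) 0, zero_comp]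

lemma IsSerreFG.isSerreClass {𝒞 : Set C} (h𝒞 : IsSerreFG C 𝒞) :
    ObjectProperty.IsSerreClass (· ∈ 𝒞) where
  exists_zero := ⟨_, isZero_zero C, h𝒞.zero_mem _ (isZero_zero C)⟩
  prop_of_mono f _ hY := h𝒞.subobject_mem _ _ f inferInstance hY
  prop_of_epi f _ hX := h𝒞.quotient_mem _ _ f inferInstance hX
  prop_X₂_of_shortExact hS h₁ h₃ := h𝒞.extension_mem _ _ _ _ _ ⟨_, hS⟩ h₁ h₃

lemma specializationClosed_suppSet (𝒞 : Set C) : SpecializationClosed C (suppSet C 𝒞) := by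
  intro P hP
  obtain ⟨M, hM, hPM⟩ := Set.mem_iUnion₂.1 hP
  exact (supp_mono (pt_mem_supp_iff.1 hPM)).trans (Set.subset_biUnion_of_mem hM)

lemma mem_of_supp_subset_suppSet (hass : HasAssociatedPoints C) {𝒞 : Set C} (h𝒞 : IsSerreFG C 𝒞)
    {M : C} [IsNoetherianObject M] (hM : supp C M ⊆ suppSet C 𝒞) : M ∈ 𝒞 := by
  have := h𝒞.isSerreClass
  refine ObjectProperty.prop_of_forall_quotient_exists_subobject _ M fun N p _ hN => ?_
  obtain ⟨_, Q, rfl, u, _⟩ := hass N hN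
  obtain ⟨L, hL, hQL⟩ :=
    Set.mem_iUnion₂.1 (hM (pt_mem_supp_iff.2 ((Prec.of_mono u).trans (.of_epi p))))
  exact ⟨Q.1, u, inferInstance, Q.2.1, prop_of_prec _ (pt_mem_supp_iff.1 hQL) hL⟩

lemma suppInv_suppSet (hass : HasAssociatedPoints C) {𝒞 : Set C} (h𝒞 : IsSerreFG C 𝒞) :
    suppInv C (suppSet C 𝒞) = 𝒞 :=
  Set.Subset.antisymm (fun _ ⟨_, hM⟩ => mem_of_supp_subset_suppSet hass h𝒞 hM)
    fun M hM => ⟨h𝒞.fg M hM, Set.subset_biUnion_of_mem hM⟩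

lemma isSerreFG_suppInv (S : Set (SpecPoint C)) : IsSerreFG C (suppInv C S) where
  fg _ hX := hX.1
  replete X Y hX := fun ⟨e⟩ =>
    have := hX.1
    ⟨isNoetherianObject_of_mono e.inv, (supp_mono (.of_mono e.inv)).trans hX.2⟩
  zero_mem Z hZ := ⟨isNoetherianObject_of_isZero hZ, by simp [supp_eq_empty_of_isZero hZ]⟩
  subobject_mem X Y f _ hY :=
    have := hY.1
    ⟨isNoetherianObject_of_mono f, (supp_mono (.of_mono f)).trans hY.2⟩
  quotient_mem X Y f _ hX :=
    have := hX.1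
    ⟨isNoetherianObject_of_epi f, (supp_mono (.of_epi f)).trans hX.2⟩
  extension_mem X M Y f g := fun ⟨_, hS⟩ hX hY =>
    have := hX.1
    have := hY.1
    ⟨isNoetherianObject_of_shortExact hS,
      (supp_subset_union_of_shortExact hS).trans (Set.union_subset hX.2 hY.2)⟩

lemma suppSet_suppInv (hln : LocallyNoetherian C) {S : Set (SpecPoint C)}
    (hS : SpecializationClosed C S) : suppSet C (suppInv C S) = S := by
  refine Set.Subset.antisymm (Set.iUnion₂_subset fun M hM => hM.2) fun x hx => ?_
  obtain ⟨P, rfl⟩ := Quot.exists_rep x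
  obtain ⟨N, i, _, hN, _⟩ := exists_mono_isNoetherianObject hln P.2.1
  exact Set.mem_iUnion₂.2 ⟨N, ⟨inferInstance, (supp_mono (.of_mono i)).trans (hS P hx)⟩,
    ⟨N, P.2.of_mono i hN⟩, Quot.sound (P.2.2 N i inferInstance hN), .refl N⟩

end

variable (C : Type u) [Category.{v} C] [Abelian C]

theorem serre_biject_specialization_closed
    (hln : LocallyNoetherian C) (hass : HasAssociatedPoints C) :
    (∀ 𝒞 : Set C, IsSerreFG C 𝒞 →
      SpecializationClosed C (suppSet C 𝒞) ∧ suppInv C (suppSet C 𝒞) = 𝒞) ∧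
    (∀ S : Set (SpecPoint C), SpecializationClosed C S →
      IsSerreFG C (suppInv C S) ∧ suppSet C (suppInv C S) = S) :=
  ⟨fun 𝒞 h𝒞 => ⟨specializationClosed_suppSet 𝒞, suppInv_suppSet hass h𝒞⟩,
    fun S hS => ⟨isSerreFG_suppInv S, suppSet_suppInv hln hS⟩⟩

end RosenbergSpec
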